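/- Let π : M → N be a continuous surjective map between topological spaces and let g ∈ C(M,ℝ) be integral over C(N,ℝ) via φ_π, i.e. gⁿ + (f₁∘π)g^{n−1} + ⋯ + (fₙ∘π) = 0 for some n ≥ 1 and f₁,…,fₙ ∈ C(N,ℝ). Then there exist k ≥ 1 and h₁,…,h_k ∈ C(N,ℝ) such that ∏_{j=1}^k (g − h_j∘π) = 0 in C(M,ℝ). -/

import Mathlib

/-!
At each `m ∈ M` the integrality relation says that `g m` is a real root of the monic polynomial
`Xⁿ + f₁(π m) Xⁿ⁻¹ + ⋯ + fₙ(π m)`, so `g m` is one of the order statistics of the real parts of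
its complex roots. These order statistics depend continuously on the coefficients: on the space
of roots they are continuous (min–max formulas) and symmetric, and the roots-to-coefficients map
`ℂⁿ → ℂⁿ` is a proper surjection, hence a quotient map through which they descend. Composing them
with `(f₁, …, fₙ)` gives the continuous `h_j`, and at every point of `M` one factor `g - h_j ∘ π`
vanishes.
-/

open ContinuousMap

/-- The ring homomorphism `φ_π : C(N, ℝ) →+* C(M, ℝ)`, `f ↦ f ∘ π`, induced by a
continuous map `π : M → N`. -/
noncomputable def phiPi {M N : Type*} [TopologicalSpace M] [TopologicalSpace N]
    (π : C(M, N)) : C(N, ℝ) →+* C(M, ℝ) :=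
  (ContinuousMap.compRightAlgHom ℝ ℝ π).toRingHom

@[simp]
theorem phiPi_apply {M N : Type*} [TopologicalSpace M] [TopologicalSpace N] (π : C(M, N))
    (f : C(N, ℝ)) (m : M) : phiPi π f m = f (π m) :=
  rfl

open Finset Polynomial

namespace Tuple

variable {α : Type*} [LinearOrder α] {n : ℕ}

/-- The `(j+1)`-st smallest entry of `x`, counted with multiplicity. -/
noncomputable def orderStat (j : Fin n) (x : Fin n → α) : α :=
  (univ.powersetCard (j + 1)).attach.inf'
    (attach_nonempty_iff.mpr (powersetCard_nonempty.mpr (by simp)))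
    fun S ↦ S.1.sup' (card_pos.mp (by rw [(mem_powersetCard.mp S.2).2]; omega)) x

theorem continuous_orderStat [TopologicalSpace α] [OrderClosedTopology α] (j : Fin n) :
    Continuous (orderStat (α := α) j) :=
  Continuous.finset_inf'_apply _ fun _ _ ↦
    Continuous.finset_sup'_apply _ fun i _ ↦ continuous_apply i

theorem lt_card_filter_le_orderStat (j : Fin n) (x : Fin n → α) :
    (j : ℕ) < #{i | x i ≤ orderStat j x} := by
  obtain ⟨S, -, hS⟩ : ∃ S ∈ _, orderStat j x = _ := exists_mem_eq_inf' _ _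
  rw [hS]
  calc (j : ℕ) < #S.1 := by rw [(mem_powersetCard.mp S.2).2]; omega
    _ ≤ _ := card_le_card fun i hi ↦ mem_filter.mpr ⟨mem_univ i, le_sup' x hi⟩

theorem card_filter_le_le_of_lt_orderStat {j : Fin n} {x : Fin n → α} {t : α}
    (ht : t < orderStat j x) : #{i | x i ≤ t} ≤ j := by
  by_contra! h
  obtain ⟨S, hSt, hS⟩ := exists_subset_card_eq (Nat.succ_le_of_lt h)
  have hS' : S ∈ univ.powersetCard (j + 1) := mem_powersetCard.mpr ⟨subset_univ S, hS⟩
  refine ht.not_ge (le_trans (inf'_le _ (mem_attach _ ⟨S, hS'⟩)) (sup'_le _ _ fun i hi ↦ ?_))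
  exact (mem_filter.mp (hSt hi)).2

theorem orderStat_eq_of_card_filter_le {j : Fin n} {x : Fin n → α} {t : α}
    (hlt : (j : ℕ) < #{i | x i ≤ t}) (hle : ∀ s < t, #{i | x i ≤ s} ≤ j) :
    orderStat j x = t := by
  refine le_antisymm (not_lt.mp fun h ↦ ?_) (not_lt.mp fun h ↦ ?_)
  · exact hlt.not_ge (card_filter_le_le_of_lt_orderStat h)
  · exact (lt_card_filter_le_orderStat j x).not_ge (hle _ h)

theorem orderStat_eq_of_map_univ_eq {x w : Fin n → α} (h : univ.val.map x = univ.val.map w)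
    (j : Fin n) : orderStat j x = orderStat j w := by
  have hcard : ∀ t, #{i | x i ≤ t} = #{i | w i ≤ t} := fun t ↦ by
    have := congrArg (Multiset.countP (· ≤ t)) h
    rwa [Multiset.countP_map, Multiset.countP_map, ← filter_val, ← filter_val, ← card_def,
      ← card_def] at this
  refine orderStat_eq_of_card_filter_le ?_ fun s hs ↦ ?_
  · rw [hcard]; exact lt_card_filter_le_orderStat j w
  · rw [hcard]; exact card_filter_le_le_of_lt_orderStat hs

theorem exists_orderStat_eq (x : Fin n → α) (i : Fin n) : ∃ j, orderStat j x = x i := by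
  set below : Finset (Fin n) := {i' | x i' ≤ x i}
  have hi : i ∈ below := by simp [below]
  have hpos : 0 < #below := card_pos.mpr ⟨i, hi⟩
  have hle : #below ≤ n := card_le_univ _ |>.trans_eq (Fintype.card_fin n)
  refine ⟨⟨#below - 1, by omega⟩,
    orderStat_eq_of_card_filter_le (by change #below - 1 < #below; omega) fun s hs ↦ ?_⟩
  calc #{i' | x i' ≤ s} ≤ #(below.erase i) := card_le_card fun i' hi' ↦ by
        simp only [below, mem_filter, mem_univ, true_and, mem_erase] at hi' ⊢
        exact ⟨by rintro rfl; exact hs.not_ge hi', hi'.trans hs.le⟩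
    _ = #below - 1 := card_erase_of_mem hi

end Tuple

theorem Multiset.exists_map_univ_eq {α : Type*} {n : ℕ} (s : Multiset α) (h : card s = n) :
    ∃ z : Fin n → α, univ.val.map z = s := by
  subst h
  refine ⟨fun i ↦ s.toList.get (i.cast (length_toList s).symm), ?_⟩
  rw [Fin.univ_val_map]
  conv_rhs => rw [← coe_toList s]
  congr 1
  apply List.ext_get (by simp)
  intro k _ _
  simp

namespace Polynomial

section CommRing

variable {R : Type*} [CommRing R] {n : ℕ}

theorem Monic.eq_of_coeff_eq {p q : R[X]} (hp : p.Monic) (hq : q.Monic) (hpn : p.natDegree = n)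
    (hqn : q.natDegree = n) (h : ∀ i : Fin n, p.coeff i = q.coeff i) : p = q := by
  ext k
  rcases lt_trichotomy k n with hk | rfl | hk
  · exact h ⟨k, hk⟩
  · rw [← hpn, hp.coeff_natDegree, hpn, ← hqn, hq.coeff_natDegree]
  · rw [coeff_eq_zero_of_natDegree_lt (hpn ▸ hk), coeff_eq_zero_of_natDegree_lt (hqn ▸ hk)]

theorem exists_monic_coeff_eq [Nontrivial R] (a : Fin n → R) :
    ∃ p : R[X], p.Monic ∧ p.natDegree = n ∧ ∀ i : Fin n, p.coeff i = a i := by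
  set q : R[X] := ((degreeLTEquiv R n).symm a : R[X])
  have hq : q.degree < n := mem_degreeLT.mp ((degreeLTEquiv R n).symm a).2
  refine ⟨X ^ n + q, monic_X_pow_add hq, ?_, fun i ↦ ?_⟩
  · rw [natDegree_add_eq_left_of_degree_lt (by rwa [degree_X_pow]), natDegree_X_pow]
  · rw [coeff_add, coeff_X_pow, if_neg i.isLt.ne, zero_add]
    exact congrFun ((degreeLTEquiv R n).apply_symm_apply a) i

noncomputable def vieta (z : Fin n → R) (i : Fin n) : R :=
  (∏ j, (X - C (z j))).coeff i

theorem prod_X_sub_C_eq_multiset_prod (z : Fin n → R) :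
    ∏ j, (X - C (z j)) = ((univ.val.map z).map (X - C ·)).prod := by
  rw [Multiset.map_map]
  rfl

theorem prod_X_sub_C_eq_of_vieta_eq [Nontrivial R] {z : Fin n → R} {p : R[X]} (hp : p.Monic)
    (hpn : p.natDegree = n) (h : vieta z = fun i : Fin n ↦ p.coeff i) : ∏ j, (X - C (z j)) = p :=
  (monic_prod_of_monic _ _ fun j _ ↦ monic_X_sub_C (z j)).eq_of_coeff_eq hp (by simp) hpn
    (congrFun h)

theorem map_univ_eq_of_vieta_eq [IsDomain R] {z w : Fin n → R} (h : vieta z = vieta w) :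
    univ.val.map z = univ.val.map w := by
  have := prod_X_sub_C_eq_of_vieta_eq (p := ∏ j, (X - C (w j)))
    (monic_prod_of_monic _ _ fun j _ ↦ monic_X_sub_C (w j)) (by simp) h
  rw [prod_X_sub_C_eq_multiset_prod, prod_X_sub_C_eq_multiset_prod] at this
  simpa only [roots_multiset_prod_X_sub_C] using congrArg roots this

theorem vieta_surjective {K : Type*} [Field K] [IsAlgClosed K] :
    Function.Surjective (vieta (R := K) (n := n)) := by
  intro a
  obtain ⟨p, hp, hpn, hpa⟩ := exists_monic_coeff_eq a
  have hsplit : p.Splits := IsAlgClosed.splits p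
  obtain ⟨z, hz⟩ := p.roots.exists_map_univ_eq (splits_iff_card_roots.mp hsplit ▸ hpn)
  have hprod : ∏ j, (X - C (z j)) = p := by
    rw [prod_X_sub_C_eq_multiset_prod, hz, ← hsplit.eq_prod_roots_of_monic hp]
  refine ⟨z, ?_⟩
  ext i
  rw [vieta, hprod, hpa]

theorem continuous_vieta [TopologicalSpace R] [IsTopologicalRing R] :
    Continuous (vieta (R := R) (n := n)) := by
  have h (z : Fin n → R) (i : Fin n) : vieta z i =
      MvPolynomial.eval z
        ((∏ j, (X - C (MvPolynomial.X j)) : (MvPolynomial (Fin n) R)[X]).coeff i) := by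
    rw [← coeff_map, Polynomial.map_prod]
    simp [vieta]
  exact continuous_pi fun i ↦ by simpa only [h] using MvPolynomial.continuous_eval _

end CommRing

section NormedField

variable {K : Type*} [NormedField K] {n : ℕ}

theorem norm_le_norm_vieta_add_one (z : Fin n → K) : ‖z‖ ≤ ‖vieta z‖ + 1 := by
  refine (pi_norm_le_iff_of_nonneg (by positivity)).mpr fun i ↦ ?_
  set P := ∏ j, (X - C (z j))
  have hP : P.Monic := monic_prod_of_monic _ _ fun j _ ↦ monic_X_sub_C (z j)
  have hroot : P.IsRoot (z i) := by
    simpa [P, IsRoot.def, eval_prod, prod_eq_zero_iff] using ⟨i, sub_self _⟩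
  have hbound : cauchyBound P ≤ ‖vieta z‖₊ + 1 := by
    rw [cauchyBound, hP.leadingCoeff, nnnorm_one, div_one]
    gcongr
    refine Finset.sup_le fun k hk ↦ ?_
    rw [mem_range, natDegree_finsetProd_X_sub_C_eq_card, card_univ, Fintype.card_fin] at hk
    exact nnnorm_le_pi_nnnorm (vieta z) ⟨k, hk⟩
  exact_mod_cast ((hroot.norm_lt_cauchyBound hP.ne_zero).trans_le hbound).le

variable [ProperSpace K]

theorem isProperMap_vieta : IsProperMap (vieta (R := K) (n := n)) := by
  refine isProperMap_iff_isCompact_preimage.mpr ⟨continuous_vieta, fun S hS ↦ ?_⟩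
  obtain ⟨r, hr⟩ := hS.isBounded.subset_closedBall 0
  refine Metric.isCompact_of_isClosed_isBounded (hS.isClosed.preimage continuous_vieta)
    ((Metric.isBounded_closedBall (x := 0) (r := r + 1)).subset fun z hz ↦ ?_)
  have := hr hz
  rw [mem_closedBall_zero_iff] at this ⊢
  linarith [norm_le_norm_vieta_add_one z]

theorem isQuotientMap_vieta [IsAlgClosed K] : Topology.IsQuotientMap (vieta (R := K) (n := n)) :=
  isProperMap_vieta.isClosedMap.isQuotientMap continuous_vieta vieta_surjective

end NormedField

end Polynomial

/-- `rootReOrderStat j a` is the `(j+1)`-st smallest real part of a root of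
`X ^ n + a (n - 1) * X ^ (n - 1) + ⋯ + a 0`, counted with multiplicity. -/
noncomputable def rootReOrderStat {n : ℕ} (j : Fin n) : C(Fin n → ℂ, ℝ) :=
  Topology.IsQuotientMap.lift (f := ⟨vieta, continuous_vieta⟩) isQuotientMap_vieta
    ⟨fun z ↦ Tuple.orderStat j fun i ↦ (z i).re, (Tuple.continuous_orderStat j).comp (by fun_prop)⟩
    fun ⦃z w⦄ h ↦ Tuple.orderStat_eq_of_map_univ_eq (by
      have := congrArg (Multiset.map Complex.re) (map_univ_eq_of_vieta_eq h)
      rwa [Multiset.map_map, Multiset.map_map] at this) j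

theorem rootReOrderStat_vieta {n : ℕ} (j : Fin n) (z : Fin n → ℂ) :
    rootReOrderStat j (vieta z) = Tuple.orderStat j fun i ↦ (z i).re := by
  change ((rootReOrderStat j).comp ⟨vieta, continuous_vieta⟩) z = _
  exact DFunLike.congr_fun (Topology.IsQuotientMap.lift_comp _ _ _) z

theorem exists_rootReOrderStat_eq {n : ℕ} {p : ℝ[X]} (hp : p.Monic) (hpn : p.natDegree = n)
    {x : ℝ} (hx : p.eval x = 0) :
    ∃ j : Fin n, rootReOrderStat j (fun i ↦ (p.coeff i : ℂ)) = x := by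
  obtain ⟨z, hz⟩ := vieta_surjective fun i : Fin n ↦ (p.coeff i : ℂ)
  have hprod : ∏ j, (X - Polynomial.C (z j)) = p.map Complex.ofRealHom :=
    prod_X_sub_C_eq_of_vieta_eq (hp.map _) (by rwa [hp.natDegree_map]) (by simpa using hz)
  have hroot : (p.map Complex.ofRealHom).eval (x : ℂ) = 0 := by
    rw [eval_map, ← Complex.ofRealHom_eq_coe, eval₂_at_apply, hx, map_zero]
  obtain ⟨i, -, hi⟩ := prod_eq_zero_iff.mp (by simpa [← hprod, eval_prod] using hroot)
  obtain ⟨j, hj⟩ := Tuple.exists_orderStat_eq (fun i ↦ (z i).re) i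
  refine ⟨j, ?_⟩
  rw [← hz, rootReOrderStat_vieta, hj, ← sub_eq_zero.mp hi, Complex.ofReal_re]

theorem prod_sub_rootReOrderStat_eq_zero {M N : Type*} [TopologicalSpace M] [TopologicalSpace N]
    (π : C(M, N)) (g : C(M, ℝ)) {p : C(N, ℝ)[X]} (hp : p.Monic) (hg : p.eval₂ (phiPi π) g = 0) :
    ∏ j : Fin p.natDegree, (g - phiPi π ((rootReOrderStat j).comp
      ⟨fun y i ↦ (p.coeff i y : ℂ), by fun_prop⟩)) = 0 := by
  ext m
  set E : C(N, ℝ) →+* ℝ := (evalAlgHom ℝ ℝ (π m)).toRingHom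
  have hm : (p.map E).eval (g m) = 0 := by
    have := congrArg (evalAlgHom ℝ ℝ m).toRingHom hg
    rw [hom_eval₂, map_zero] at this
    rw [eval_map]
    exact this
  obtain ⟨j, hj⟩ := exists_rootReOrderStat_eq (hp.map E) (hp.natDegree_map E) hm
  rw [ContinuousMap.prod_apply, ContinuousMap.zero_apply]
  exact prod_eq_zero (mem_univ j) (by simpa [coeff_map, E, sub_eq_zero] using hj.symm)

theorem integral_elem_product_relation_general {M N : Type*} [TopologicalSpace M]
    [TopologicalSpace N] (π : C(M, N))
    (g : C(M, ℝ)) (hint : (phiPi π).IsIntegralElem g) :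
    ∃ k : ℕ, 1 ≤ k ∧ ∃ h : Fin k → C(N, ℝ), ∏ j, (g - phiPi π (h j)) = 0 := by
  obtain ⟨p, hp, hg⟩ := hint
  obtain ⟨n, h, hprod⟩ : ∃ n, ∃ h : Fin n → C(N, ℝ), ∏ j, (g - phiPi π (h j)) = 0 :=
    ⟨_, _, prod_sub_rootReOrderStat_eq_zero π g hp hg⟩
  rcases n with _ | n
  · have : Subsingleton C(M, ℝ) := subsingleton_of_zero_eq_one (by simpa using hprod.symm)
    exact ⟨1, le_rfl, 0, Subsingleton.elim _ _⟩
  · exact ⟨n + 1, n.succ_pos, h, hprod⟩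

/-- Let `π : M → N` be a continuous surjection of topological spaces
and `g ∈ C(M, ℝ)` integral over `C(N, ℝ)` via `φ_π`. Then there exist `k ≥ 1` and
`h₁, …, h_k ∈ C(N, ℝ)` with `∏ⱼ (g − hⱼ ∘ π) = 0` in `C(M, ℝ)`. -/
theorem integral_elem_product_relation {M N : Type*} [TopologicalSpace M]
    [TopologicalSpace N] (π : C(M, N)) (hsurj : Function.Surjective π)
    (g : C(M, ℝ)) (hint : (phiPi π).IsIntegralElem g) :
    ∃ k : ℕ, 1 ≤ k ∧ ∃ h : Fin k → C(N, ℝ), ∏ j, (g - phiPi π (h j)) = 0 :=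
  integral_elem_product_relation_general π g hint
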